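/- Let Φ : I → O be a quantum channel, (E, W) a minimal Stinespring module related to Φ, and (π, V, E) the associated Stinespring representation of Φ*. Then applying the slice map id ⊗ tr (trace over O^op) to the quantum confusability multigraph recovers the quantum confusability graph: (id ⊗ tr)(S̃_Φ) = S_Φ, where S̃_Φ = W* L(E) W ⊆ B(H_in) ⊗ O^op and S_Φ = V* π(O)' V ⊆ B(H_in). -/

import Mathlib

/-!
STATEMENT 5: Let `Φ : I → O` be a quantum channel, `(E, W)` a minimal Stinespring
module related to `Φ`, and `(π, V, E)` the associated Stinespring representation of
`Φ*` (so `π = ρ` is the right `O^op`-multiplication representation of `O` on `E` and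
`V = W ∘ i` with `i(η) = η ⊗ 1`).  Then applying the slice map `id ⊗ tr` (trace over
`O^op`) to the quantum confusability multigraph recovers the quantum confusability
graph:
  `(id ⊗ tr)(S̃_Φ) = S_Φ`,
where `S̃_Φ = W* L(E) W ⊆ B(H_in) ⊗ O^op ≅ L(M_Φ)` and `S_Φ = V* π(O)' V ⊆ B(H_in)`
(`π(O)' = L(E)` is the commutant of `ρ(O)` in `B(E)`).

Encoding of Stinespring modules as in the other files; `id ⊗ tr` is the explicit
entry-averaging slice map `sliceMat` on operators of the module `M_Φ` (which on
`A ⊗ y` returns `tr(y)·A`).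
-/

open scoped ComplexOrder Kronecker Matrix

local notation "⟪" x ", " y "⟫_ℂ" => @inner ℂ _ _ x y

namespace Stmt5

abbrev PiMat (ι : Type) (d : ι → Type) [∀ i, Fintype (d i)] : Type _ :=
  ∀ i, Matrix (d i) (d i) ℂ

def toBig {k d : Type} (X : Matrix k k (Matrix d d ℂ)) : Matrix (k × d) (k × d) ℂ :=
  Matrix.of fun p q => X p.1 q.1 p.2 q.2

variable {ιa ιb : Type} [Fintype ιa] [DecidableEq ιa] [Fintype ιb] [DecidableEq ιb]
  {da : ιa → Type} [∀ a, Fintype (da a)] [∀ a, DecidableEq (da a)]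
  {db : ιb → Type} [∀ b, Fintype (db b)] [∀ b, DecidableEq (db b)]

def eMat (a : ιa) (i j : da a) : PiMat ιa da :=
  Pi.single a (Matrix.single i j 1)

def IsCP (Φ : PiMat ιa da →ₗ[ℂ] PiMat ιb db) : Prop :=
  ∀ (n : ℕ) (X : Matrix (Fin n) (Fin n) (PiMat ιa da)),
    (toBig (X.map (Matrix.blockDiagonal' (α := ℂ)))).PosSemidef →
    (toBig ((X.map ⇑Φ).map (Matrix.blockDiagonal' (α := ℂ)))).PosSemidef

noncomputable def trPi {ι : Type} [Fintype ι] {d : ι → Type} [∀ i, Fintype (d i)]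
    (x : PiMat ι d) : ℂ :=
  ∑ i, (x i).trace

/-- Right multiplication by `y ∈ O^op` on the Hilbert–Schmidt space of `O`. -/
def RmatO (y : PiMat ιb db) :
    Matrix (Σ b, db b × db b) (Σ b, db b × db b) ℂ :=
  Matrix.blockDiagonal' fun b => Matrix.of fun pq pq' : db b × db b =>
    if pq.1 = pq'.1 then y b pq'.2 pq.2 else 0

/-- Left multiplication by `y ∈ O` on the Hilbert–Schmidt space of `O`. -/
def LmatO (y : PiMat ιb db) :
    Matrix (Σ b, db b × db b) (Σ b, db b × db b) ℂ :=
  Matrix.blockDiagonal' fun b => Matrix.of fun pq pq' : db b × db b =>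
    if pq.2 = pq'.2 then y b pq.1 pq'.1 else 0

/-- The right `O^op`-module action on `M_Φ = H_in ⊗ O^op`. -/
def actOMat (x : PiMat ιb db) :
    Matrix ((Σ a, da a) × Σ b, db b × db b) ((Σ a, da a) × Σ b, db b × db b) ℂ :=
  (1 : Matrix (Σ a, da a) (Σ a, da a) ℂ) ⊗ₖ LmatO x

/-- The Choi-type invariant `C_Φ = Σ_{i,j,a} e^a_{ij} ⊗ Φ(e^a_{ji})`, as an operator
on the module `M_Φ`. -/
noncomputable def CMat (Φ : PiMat ιa da →ₗ[ℂ] PiMat ιb db) :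
    Matrix ((Σ a, da a) × Σ b, db b × db b) ((Σ a, da a) × Σ b, db b × db b) ℂ :=
  ∑ a : ιa, ∑ i : da a, ∑ j : da a,
    Matrix.single (⟨a, i⟩ : Σ a, da a) (⟨a, j⟩ : Σ a, da a) (1 : ℂ) ⊗ₖ
      RmatO (Φ (eMat a j i))

/-- The matrix of the isometry `i : H_in → M_Φ`, `ξ ↦ ξ ⊗ 1`. -/
def embedMat : Matrix ((Σ a, da a) × Σ b, db b × db b) (Σ a, da a) ℂ :=
  Matrix.of fun p i => if p.1 = i ∧ p.2.2.1 = p.2.2.2 then 1 else 0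

/-- `i : H_in → M_Φ` as a continuous linear map of Euclidean spaces. -/
noncomputable def embedCLM :
    EuclideanSpace ℂ (Σ a, da a) →L[ℂ]
      EuclideanSpace ℂ ((Σ a, da a) × Σ b, db b × db b) :=
  LinearMap.toContinuousLinearMap (Matrix.toEuclideanLin (embedMat (da := da) (db := db)))

/-- The slice map `id ⊗ tr : L(M_Φ) ≅ B(H_in) ⊗ O^op → B(H_in)` (on `A ⊗ y` it
returns `tr(y)·A`). -/
noncomputable def sliceMat
    (T : EuclideanSpace ℂ ((Σ a, da a) × Σ b, db b × db b) →L[ℂ]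
         EuclideanSpace ℂ ((Σ a, da a) × Σ b, db b × db b)) :
    Matrix (Σ a, da a) (Σ a, da a) ℂ :=
  Matrix.of fun i i' =>
    ∑ b : ιb, (Fintype.card (db b) : ℂ)⁻¹ *
      ∑ k : db b, ∑ l : db b,
        T (EuclideanSpace.single (i', ⟨b, (k, l)⟩) 1) (i, ⟨b, (k, l)⟩)


section Aux

variable {ιa ιb : Type} [Fintype ιa] [DecidableEq ιa] [Fintype ιb] [DecidableEq ιb]
  {da : ιa → Type} [∀ a, Fintype (da a)] [∀ a, DecidableEq (da a)]
  {db : ιb → Type} [∀ b, Fintype (db b)] [∀ b, DecidableEq (db b)]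

/-- matrix units in `O`. -/
noncomputable def xe (b : ιb) (k m : db b) : PiMat ιb db :=
  Pi.single b (Matrix.single k m 1)

lemma clm_single_apply {n : Type} [Fintype n] [DecidableEq n] (M : Matrix n n ℂ) (j p : n) :
    (Matrix.toEuclideanCLM (𝕜 := ℂ) M (EuclideanSpace.single j 1)) p = M p j := by
  have : (Matrix.toEuclideanCLM (𝕜 := ℂ) M (EuclideanSpace.single j 1)) =
      Matrix.toEuclideanLin M (EuclideanSpace.single j 1) := rfl
  rw [this, Matrix.toEuclideanLin_apply]
  simp [Matrix.mulVec, dotProduct, EuclideanSpace.single_apply]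

lemma clm_ext {n : Type} [Fintype n] [DecidableEq n]
    {S S' : EuclideanSpace ℂ n →L[ℂ] EuclideanSpace ℂ n}
    (h : ∀ j, S (EuclideanSpace.single j 1) = S' (EuclideanSpace.single j 1)) : S = S' := by
  apply ContinuousLinearMap.coe_injective
  apply Module.Basis.ext (EuclideanSpace.basisFun n ℂ).toBasis
  intro j
  simpa [EuclideanSpace.basisFun_apply] using h j

lemma act_xe_single_same (b : ιb) (k m : db b) (i : Σ a, da a) (p q : db b) :
    Matrix.toEuclideanCLM (𝕜 := ℂ) (actOMat (da := da) (xe b k m))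
      (EuclideanSpace.single (⟨i, ⟨b, (p, q)⟩⟩) 1)
    = if p = m then EuclideanSpace.single (⟨i, ⟨b, (k, q)⟩⟩) 1 else 0 := by
  ext ⟨i₂, ⟨b₂, p₂, q₂⟩⟩
  rcases eq_or_ne b₂ b with rfl | hb
  · rw [clm_single_apply]
    simp only [actOMat, LmatO, xe, Matrix.kroneckerMap_apply, Matrix.blockDiagonal'_apply_eq,
      Matrix.one_apply, Pi.single_eq_same, Matrix.of_apply, Matrix.single,
      EuclideanSpace.single_apply]
    by_cases hpm : p = m
    · subst hpm
      rw [if_pos rfl, EuclideanSpace.single_apply]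
      simp only [Prod.mk.injEq, Sigma.mk.inj_iff, heq_eq_eq, Prod.ext_iff]
      split_ifs <;> simp_all
    · rw [if_neg hpm]
      split_ifs <;> simp_all
  · rw [clm_single_apply]
    simp only [actOMat, LmatO, xe, Matrix.kroneckerMap_apply,
      Matrix.blockDiagonal'_apply_ne _ _ _ hb]
    have : (⟨i₂, ⟨b₂, (p₂, q₂)⟩⟩ : (Σ a, da a) × Σ b, db b × db b) ≠ ⟨i, ⟨b, (k, q)⟩⟩ := by
      intro h; exact hb (congrArg (fun z => z.snd.fst) h)
    split_ifs <;> simp_all [EuclideanSpace.single_apply]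

lemma act_xe_single_ne (b : ιb) (k m : db b) (i : Σ a, da a) {b' : ιb} (hb : b' ≠ b)
    (p q : db b') :
    Matrix.toEuclideanCLM (𝕜 := ℂ) (actOMat (da := da) (xe b k m))
      (EuclideanSpace.single (⟨i, ⟨b', (p, q)⟩⟩) 1) = 0 := by
  ext ⟨i₂, ⟨b₂, p₂, q₂⟩⟩
  rw [clm_single_apply]
  rcases eq_or_ne b₂ b' with rfl | hb2
  · simp only [actOMat, LmatO, xe, Matrix.kroneckerMap_apply, Matrix.blockDiagonal'_apply_eq,
      Matrix.of_apply, Pi.single_eq_of_ne hb]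
    simp
  · simp only [actOMat, LmatO, Matrix.kroneckerMap_apply,
      Matrix.blockDiagonal'_apply_ne _ _ _ hb2]
    simp

lemma xe_mul_same (b : ιb) (k m m' : db b) :
    xe (db := db) b k m * xe b m m' = xe b k m' := by
  funext b'
  rcases eq_or_ne b' b with rfl | hb
  · simp [xe, Pi.mul_apply]
  · simp [xe, Pi.mul_apply, Pi.single_eq_of_ne hb]

lemma xe_star (b : ιb) (k m : db b) : star (xe (db := db) b k m) = xe b m k := by
  funext b'
  rw [Pi.star_apply]
  rcases eq_or_ne b' b with rfl | hb
  · rw [xe, xe, Pi.single_eq_same, Pi.single_eq_same]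
    ext p q
    simp [Matrix.conjTranspose_apply, Matrix.single, and_comm]
  · rw [xe, xe, Pi.single_eq_of_ne hb, Pi.single_eq_of_ne hb, star_zero]

lemma pair_eq_iff {i i' : Σ a, da a} {b b' : ιb} {p q : db b} {p' q' : db b'} :
    ((⟨i, ⟨b, (p, q)⟩⟩ : (Σ a, da a) × Σ b, db b × db b) = ⟨i', ⟨b', (p', q')⟩⟩)
      ↔ i = i' ∧ ((⟨b, p⟩ : Σ b, db b) = ⟨b', p'⟩ ∧ (⟨b, q⟩ : Σ b, db b) = ⟨b', q'⟩) := by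
  constructor
  · intro h
    have h1 := congrArg Prod.fst h
    have h2 := congrArg Prod.snd h
    simp only at h1 h2
    obtain ⟨rfl, h3⟩ := Sigma.mk.inj_iff.mp h2
    obtain ⟨rfl, rfl⟩ := Prod.mk.injEq _ _ _ _ ▸ (eq_of_heq h3)
    exact ⟨h1, rfl, rfl⟩
  · rintro ⟨rfl, h1, h2⟩
    obtain ⟨rfl, hp⟩ := Sigma.mk.inj_iff.mp h1
    obtain ⟨-, hq⟩ := Sigma.mk.inj_iff.mp h2
    rw [eq_of_heq hp, eq_of_heq hq]

lemma embed_single (i : Σ a, da a) :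
    embedCLM (da := da) (db := db) (EuclideanSpace.single i 1)
      = ∑ j : Σ b, db b, EuclideanSpace.single (⟨i, ⟨j.1, (j.2, j.2)⟩⟩) 1 := by
  ext ⟨i₂, ⟨b₂, p₂, q₂⟩⟩
  have h1 : embedCLM (da := da) (db := db) (EuclideanSpace.single i 1) (⟨i₂, ⟨b₂, (p₂, q₂)⟩⟩)
      = embedMat (da := da) (db := db) (⟨i₂, ⟨b₂, (p₂, q₂)⟩⟩) i := by
    have : embedCLM (da := da) (db := db) (EuclideanSpace.single i 1)
        = Matrix.toEuclideanLin (embedMat (da := da) (db := db)) (EuclideanSpace.single i 1) := rfl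
    rw [this, Matrix.toEuclideanLin_apply]
    simp [Matrix.mulVec, dotProduct, EuclideanSpace.single_apply]
  rw [h1]
  have h2 : (∑ j : Σ b, db b, EuclideanSpace.single
        (⟨i, ⟨j.1, (j.2, j.2)⟩⟩ : (Σ a, da a) × Σ b, db b × db b) (1 : ℂ)) (⟨i₂, ⟨b₂, (p₂, q₂)⟩⟩)
      = ∑ j : Σ b, db b, (EuclideanSpace.single
        (⟨i, ⟨j.1, (j.2, j.2)⟩⟩ : (Σ a, da a) × Σ b, db b × db b) (1 : ℂ)) (⟨i₂, ⟨b₂, (p₂, q₂)⟩⟩) :=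
    by rw [WithLp.ofLp_sum, Finset.sum_apply]
  rw [h2]
  simp only [EuclideanSpace.single_apply, embedMat, Matrix.of_apply, pair_eq_iff, Sigma.eta]
  by_cases hi : i₂ = i
  · simp only [hi, true_and]
    by_cases hpq : p₂ = q₂
    · subst hpq
      simp
    · rw [if_neg hpq]
      symm
      apply Finset.sum_eq_zero
      intro j _
      rw [if_neg]
      rintro ⟨rfl, h2⟩
      obtain ⟨-, h3⟩ := Sigma.mk.inj_iff.mp h2
      exact hpq (eq_of_heq h3).symm
  · simp [hi]

end Aux

theorem stmt5
    (Φ : PiMat ιa da →ₗ[ℂ] PiMat ιb db) (hCP : IsCP Φ)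
    (hTP : ∀ x : PiMat ιa da, trPi (Φ x) = trPi x)
    (E : Type) [NormedAddCommGroup E] [InnerProductSpace ℂ E] [CompleteSpace E]
    (ρ : PiMat ιb db →⋆ₐ[ℂ] (E →L[ℂ] E))
    (W : EuclideanSpace ℂ ((Σ a, da a) × Σ b, db b × db b) →L[ℂ] E)
    (hW₁ : ∀ (x : PiMat ιb db) ξ,
      W (Matrix.toEuclideanCLM (𝕜 := ℂ) (actOMat (da := da) x) ξ) = ρ x (W ξ))
    (hW₂ : ∀ ξ η, ⟪W ξ, W η⟫_ℂ = ⟪ξ, Matrix.toEuclideanCLM (𝕜 := ℂ) (CMat Φ) η⟫_ℂ)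
    (hmin : DenseRange ⇑W) :
    {S : EuclideanSpace ℂ (Σ a, da a) →L[ℂ] EuclideanSpace ℂ (Σ a, da a) |
      ∃ T : E →L[ℂ] E, (∀ x : PiMat ιb db, T ∘L ρ x = ρ x ∘L T) ∧
        S = Matrix.toEuclideanCLM (𝕜 := ℂ)
              (sliceMat (ContinuousLinearMap.adjoint W ∘L T ∘L W))}
      = {S | ∃ T : E →L[ℂ] E, (∀ x : PiMat ιb db, T ∘L ρ x = ρ x ∘L T) ∧
          S = ContinuousLinearMap.adjoint (W ∘L embedCLM (da := da) (db := db)) ∘L T ∘L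
                (W ∘L embedCLM (da := da) (db := db))} := by
  clear hCP hTP hW₂ hmin Φ
  have hTcomm : ∀ (T : E →L[ℂ] E), (∀ x : PiMat ιb db, T ∘L ρ x = ρ x ∘L T) →
      ∀ (x : PiMat ιb db) v, T (ρ x v) = ρ x (T v) := by
    intro T hT x v
    have := congrArg (fun (A : E →L[ℂ] E) => A v) (hT x)
    simpa using this
  have hρadj : ∀ x : PiMat ιb db, ContinuousLinearMap.adjoint (ρ x) = ρ (star x) := by
    intro x; rw [← ContinuousLinearMap.star_eq_adjoint, ← map_star]
  have hmove : ∀ (b : ιb) (k m : db b) (i : Σ a, da a) (q : db b),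
      ρ (xe b k m) (W (EuclideanSpace.single (⟨i, ⟨b, (m, q)⟩⟩) 1)) =
        W (EuclideanSpace.single (⟨i, ⟨b, (k, q)⟩⟩) 1) := by
    intro b k m i q
    rw [← hW₁, act_xe_single_same, if_pos rfl]
  have hkill : ∀ (b : ιb) (k m : db b) (i : Σ a, da a) (j : Σ b, db b),
      (⟨b, m⟩ : Σ b, db b) ≠ j →
      ρ (xe b k m) (W (EuclideanSpace.single (⟨i, ⟨j.1, (j.2, j.2)⟩⟩) 1)) = 0 := by
    rintro b k m i ⟨b', p⟩ hne
    rcases eq_or_ne b' b with rfl | hb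
    · have hpm : p ≠ m := fun h => hne (by rw [h])
      rw [← hW₁, act_xe_single_same, if_neg hpm, map_zero]
    · rw [← hW₁, act_xe_single_ne b k m i hb, map_zero]
  have key : ∀ (T : E →L[ℂ] E), (∀ x : PiMat ιb db, T ∘L ρ x = ρ x ∘L T) →
      Matrix.toEuclideanCLM (𝕜 := ℂ)
          (sliceMat (ContinuousLinearMap.adjoint W ∘L T ∘L W))
        = ContinuousLinearMap.adjoint (W ∘L embedCLM (da := da) (db := db)) ∘L T ∘L
            (W ∘L embedCLM (da := da) (db := db)) := by
    intro T hT
    have hterm : ∀ (b : ιb) (k l : db b) (i i' : Σ a, da a),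
        ⟪W (EuclideanSpace.single (⟨i, ⟨b, (k, l)⟩⟩) 1),
            T (W (EuclideanSpace.single (⟨i', ⟨b, (k, l)⟩⟩) 1))⟫_ℂ
          = ⟪W (EuclideanSpace.single (⟨i, ⟨b, (l, l)⟩⟩) 1),
              T (W (EuclideanSpace.single (⟨i', ⟨b, (l, l)⟩⟩) 1))⟫_ℂ := by
      intro b k l i i'
      rw [← hmove b k l i l, ← hmove b k l i' l]
      rw [hTcomm T hT]
      rw [← ContinuousLinearMap.adjoint_inner_right, hρadj, xe_star]
      rw [show (ρ (xe b l k)) ((ρ (xe b k l)) (T (W (EuclideanSpace.single (⟨i', ⟨b, (l, l)⟩⟩) 1))))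
            = (ρ (xe b l k * xe b k l)) (T (W (EuclideanSpace.single (⟨i', ⟨b, (l, l)⟩⟩) 1))) by
          rw [map_mul]; rfl]
      rw [xe_mul_same, ← hTcomm T hT, hmove b l l i' l]
    have hcross : ∀ (i i' : Σ a, da a) (j j' : Σ b, db b), j ≠ j' →
        ⟪W (EuclideanSpace.single (⟨i, ⟨j.1, (j.2, j.2)⟩⟩) 1),
            T (W (EuclideanSpace.single (⟨i', ⟨j'.1, (j'.2, j'.2)⟩⟩) 1))⟫_ℂ = 0 := by
      intro i i' j j' hne
      rw [← hmove j.1 j.2 j.2 i j.2]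
      rw [← ContinuousLinearMap.adjoint_inner_right, hρadj, xe_star]
      rw [← hTcomm T hT, hkill j.1 j.2 j.2 i' j' (by simpa using hne), map_zero, inner_zero_right]
    apply clm_ext
    intro i'
    ext i
    rw [clm_single_apply]
    have hRHS : (ContinuousLinearMap.adjoint (W ∘L embedCLM (da := da) (db := db)) ∘L T ∘L
          (W ∘L embedCLM (da := da) (db := db))) (EuclideanSpace.single i' 1) i
        = ∑ j : Σ b, db b,
            ⟪W (EuclideanSpace.single (⟨i, ⟨j.1, (j.2, j.2)⟩⟩) 1),
              T (W (EuclideanSpace.single (⟨i', ⟨j.1, (j.2, j.2)⟩⟩) 1))⟫_ℂ := by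
      have hco : ∀ v : EuclideanSpace ℂ (Σ a, da a), v i = ⟪EuclideanSpace.single i 1, v⟫_ℂ := by
        intro v; rw [EuclideanSpace.inner_single_left]; simp
      rw [ContinuousLinearMap.comp_apply, ContinuousLinearMap.comp_apply]
      rw [hco (ContinuousLinearMap.adjoint (W ∘L embedCLM (da := da) (db := db))
        (T ((W ∘L embedCLM (da := da) (db := db)) (EuclideanSpace.single i' 1))))]
      rw [ContinuousLinearMap.adjoint_inner_right, ContinuousLinearMap.comp_apply,
        ContinuousLinearMap.comp_apply, embed_single, embed_single, map_sum, map_sum, map_sum,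
        sum_inner]
      refine Finset.sum_congr rfl ?_
      intro j _
      rw [inner_sum]
      rw [Finset.sum_eq_single j]
      · intro j' _ hne
        exact hcross i i' j j' (Ne.symm hne)
      · intro h; exact absurd (Finset.mem_univ _) h
    rw [hRHS]
    rw [show sliceMat (ContinuousLinearMap.adjoint W ∘L T ∘L W) i i'
          = ∑ b : ιb, (Fintype.card (db b) : ℂ)⁻¹ * ∑ k : db b, ∑ l : db b,
            ⟪W (EuclideanSpace.single (⟨i, ⟨b, (k, l)⟩⟩) 1),
              T (W (EuclideanSpace.single (⟨i', ⟨b, (k, l)⟩⟩) 1))⟫_ℂ by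
        rw [sliceMat, Matrix.of_apply]
        refine Finset.sum_congr rfl fun b _ => ?_
        congr 1
        refine Finset.sum_congr rfl fun k _ => Finset.sum_congr rfl fun l _ => ?_
        have hco : ∀ v : EuclideanSpace ℂ ((Σ a, da a) × Σ b, db b × db b),
            v (⟨i, ⟨b, (k, l)⟩⟩) = ⟪EuclideanSpace.single (⟨i, ⟨b, (k, l)⟩⟩) 1, v⟫_ℂ := by
          intro v; rw [EuclideanSpace.inner_single_left]; simp
        rw [ContinuousLinearMap.comp_apply, ContinuousLinearMap.comp_apply]
        rw [hco (ContinuousLinearMap.adjoint W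
          (T (W (EuclideanSpace.single (⟨i', ⟨b, (k, l)⟩⟩) 1))))]
        rw [ContinuousLinearMap.adjoint_inner_right]]
    rw [← Finset.univ_sigma_univ, Finset.sum_sigma]
    refine Finset.sum_congr rfl fun b _ => ?_
    rcases isEmpty_or_nonempty (db b) with hE | hN
    · simp
    · have h1 : ∀ k : db b, (∑ l : db b,
          ⟪W (EuclideanSpace.single (⟨i, ⟨b, (k, l)⟩⟩) 1),
            T (W (EuclideanSpace.single (⟨i', ⟨b, (k, l)⟩⟩) 1))⟫_ℂ)
          = ∑ l : db b,
          ⟪W (EuclideanSpace.single (⟨i, ⟨b, (l, l)⟩⟩) 1),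
            T (W (EuclideanSpace.single (⟨i', ⟨b, (l, l)⟩⟩) 1))⟫_ℂ := by
        intro k
        exact Finset.sum_congr rfl fun l _ => hterm b k l i i'
      rw [Finset.sum_congr rfl fun k _ => h1 k, Finset.sum_const, Finset.card_univ, nsmul_eq_mul,
        ← mul_assoc, inv_mul_cancel₀ (by exact_mod_cast Fintype.card_ne_zero), one_mul]
  ext S
  simp only [Set.mem_setOf_eq]
  constructor
  · rintro ⟨T, hT, rfl⟩
    exact ⟨T, hT, key T hT⟩
  · rintro ⟨T, hT, rfl⟩
    exact ⟨T, hT, (key T hT).symm⟩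

end Stmt5
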